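/- Let z = (z_i)_{i=1}^N ∈ (ℝ^d)^N and for x ∈ (ℝ^d)^N let Q(x) be the d×d matrix with entries q^{αβ}(x) = Σ_{i=1}^N z_i^α x_i^β. Suppose θ : O → SO(d) is a differentiable map on an open set O ⊆ (ℝ^d)^N such that Q(x)θ(x) is symmetric for every x ∈ O, and suppose that at a point x ∈ O the linear map X ↦ Proj(Q(x)θ(x)X) is invertible on so(d). Then for every 1 ≤ γ ≤ d and 1 ≤ i ≤ N, ∂θ/∂x_i^γ(x) = θ(x) {Proj ∘ (Q(x)θ(x)·)}^{-1} Proj{(θ(x)^{-1} e_γ) ⊗ z_i}, where e_γ is the γ-th standard unit vector of ℝ^d and (u ⊗ w)^{αβ} = u^α w^β. -/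

import Mathlib

open Matrix

/-- Membership in the special orthogonal group SO(d). -/
def IsSO {d : ℕ} (θ : Matrix (Fin d) (Fin d) ℝ) : Prop :=
  θ * θᵀ = 1 ∧ θ.det = 1

/-- The matrix Q(x) with entries q^{αβ}(x) = Σ_i z_i^α x_i^β. -/
noncomputable def Qmat {d N : ℕ} (z x : Fin N → EuclideanSpace ℝ (Fin d)) :
    Matrix (Fin d) (Fin d) ℝ :=
  fun α β => ∑ i : Fin N, z i α * x i β

/-- Proj : M(d) → so(d), Proj Y = (Y − Yᵀ)/2, the orthogonal projection onto the
skew-symmetric matrices. -/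
noncomputable def projSkew {d : ℕ} (M : Matrix (Fin d) (Fin d) ℝ) : Matrix (Fin d) (Fin d) ℝ :=
  (1 / 2 : ℝ) • (M - Mᵀ)

/-- The matrix of partial derivatives ∂θ/∂x_i^γ (x) of a matrix-valued map
θ : (ℝ^d)^N → M(d), i.e. the entrywise derivative of θ at x in the direction of the γ-th
coordinate of the i-th particle. -/
noncomputable def partialTheta {d N : ℕ}
    (θ : (Fin N → EuclideanSpace ℝ (Fin d)) → Matrix (Fin d) (Fin d) ℝ)
    (x : Fin N → EuclideanSpace ℝ (Fin d)) (i : Fin N) (γ : Fin d) :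
    Matrix (Fin d) (Fin d) ℝ :=
  fun α β => fderiv ℝ (fun y => θ y α β) x (Pi.single i (EuclideanSpace.single γ (1 : ℝ)))

/-! Differentiate both constraints along the direction `e_γ` of the `i`-th particle, writing `∂`
for this derivative. Differentiating `θθᵀ = 1` shows that `X := θᵀ ∂θ` is skew, and `∂θ = θX`.
Since `Q` is linear in `x`, `∂Q = z_i ⊗ e_γ`, and differentiating the symmetry of `Qθ` shows that
`(∂Q)θ + Q ∂θ` is symmetric. Taking skew parts,
`Proj(QθX) = Proj(Q ∂θ) = Proj(((∂Q)θ)ᵀ) = Proj((θᵀe_γ) ⊗ z_i)`. -/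

open Filter Topology
-- With the sup norm on matrices, derivatives of matrix-valued maps are taken entrywise.
open scoped Matrix.Norms.Elementwise

section LineDeriv

variable {E : Type*} [NormedAddCommGroup E] [NormedSpace ℝ E] {x v : E}
  {l m n : Type*} [Fintype l] [Fintype m] [Fintype n]

theorem hasLineDerivAt_matrix_iff {F : E → Matrix l m ℝ} {F' : Matrix l m ℝ} :
    HasLineDerivAt ℝ F F' x v ↔ ∀ i j, HasLineDerivAt ℝ (fun y => F y i j) (F' i j) x v :=
  hasDerivAt_pi.trans (forall_congr' fun _ => hasDerivAt_pi)

theorem HasLineDerivAt.matrix_mul {F : E → Matrix l m ℝ} {G : E → Matrix m n ℝ}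
    {F' : Matrix l m ℝ} {G' : Matrix m n ℝ}
    (hF : HasLineDerivAt ℝ F F' x v) (hG : HasLineDerivAt ℝ G G' x v) :
    HasLineDerivAt ℝ (fun y => F y * G y) (F' * G x + F x * G') x v := by
  rw [hasLineDerivAt_matrix_iff] at *
  intro i j
  have hentry : ∀ k, HasLineDerivAt ℝ (fun y => F y i k * G y k j)
      (F' i k * G x k j + F x i k * G' k j) x v := fun k => by
    simpa [HasLineDerivAt] using (hF i k).fun_mul (hG k j)
  simp only [Matrix.mul_apply, Matrix.add_apply, ← Finset.sum_add_distrib]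
  exact HasDerivAt.fun_sum fun k _ => hentry k

theorem HasLineDerivAt.matrix_transpose {F : E → Matrix l m ℝ} {F' : Matrix l m ℝ}
    (hF : HasLineDerivAt ℝ F F' x v) : HasLineDerivAt ℝ (fun y => (F y)ᵀ) (F')ᵀ x v :=
  hasLineDerivAt_matrix_iff.2 fun i j => hasLineDerivAt_matrix_iff.1 hF j i

theorem HasLineDerivAt.eq_zero_of_eventuallyEq_const {F : Type*} [NormedAddCommGroup F]
    [NormedSpace ℝ F] {f : E → F} {f' c : F} (hf : HasLineDerivAt ℝ f f' x v)
    (hc : f =ᶠ[𝓝 x] fun _ => c) : f' = 0 :=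
  hf.unique <| by simpa using ((hasFDerivAt_const c x).hasLineDerivAt v).congr_of_eventuallyEq hc

theorem HasLineDerivAt.transpose_eq_of_eventually_transpose_eq {F : E → Matrix m m ℝ}
    {F' : Matrix m m ℝ} (hF : HasLineDerivAt ℝ F F' x v) (hsymm : ∀ᶠ y in 𝓝 x, (F y)ᵀ = F y) :
    (F')ᵀ = F' :=
  hF.matrix_transpose.unique (hF.congr_of_eventuallyEq hsymm)

theorem HasLineDerivAt.transpose_mul_skew [DecidableEq m] {θ : E → Matrix m m ℝ}
    {A : Matrix m m ℝ} (hθ : HasLineDerivAt ℝ θ A x v)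
    (horth : ∀ᶠ y in 𝓝 x, θ y * (θ y)ᵀ = 1) : ((θ x)ᵀ * A)ᵀ = -((θ x)ᵀ * A) := by
  have hT : (θ x)ᵀ * θ x = 1 := mul_eq_one_comm.mp horth.self_of_nhds
  have hderiv : A * (θ x)ᵀ + θ x * Aᵀ = 0 :=
    (hθ.matrix_mul hθ.matrix_transpose).eq_zero_of_eventuallyEq_const horth
  calc ((θ x)ᵀ * A)ᵀ = (θ x)ᵀ * (θ x * Aᵀ) * θ x := by
        rw [transpose_mul, transpose_transpose, ← Matrix.mul_assoc, hT, Matrix.one_mul]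
    _ = (θ x)ᵀ * -(A * (θ x)ᵀ) * θ x := by rw [eq_neg_of_add_eq_zero_right hderiv]
    _ = -((θ x)ᵀ * A) := by simp [Matrix.mul_assoc, hT]

end LineDeriv

theorem projSkew_eq_projSkew_transpose_of_add_symm {d : ℕ} {P M : Matrix (Fin d) (Fin d) ℝ}
    (h : (P + M)ᵀ = P + M) : projSkew M = projSkew Pᵀ := by
  unfold projSkew
  congr 1
  rw [transpose_transpose, sub_eq_sub_iff_add_eq_add, ← transpose_add, h, add_comm]

theorem HasLineDerivAt.projSkew_mul_transpose_mul {E : Type*} [NormedAddCommGroup E]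
    [NormedSpace ℝ E] {x v : E} {d : ℕ} {Q θ : E → Matrix (Fin d) (Fin d) ℝ}
    {Q' A : Matrix (Fin d) (Fin d) ℝ} (hQ : HasLineDerivAt ℝ Q Q' x v)
    (hθ : HasLineDerivAt ℝ θ A x v) (horth : ∀ᶠ y in 𝓝 x, θ y * (θ y)ᵀ = 1)
    (hsymm : ∀ᶠ y in 𝓝 x, (Q y * θ y)ᵀ = Q y * θ y) :
    projSkew (Q x * θ x * ((θ x)ᵀ * A)) = projSkew (Q' * θ x)ᵀ := by
  rw [← Matrix.mul_assoc, Matrix.mul_assoc (Q x), horth.self_of_nhds, Matrix.mul_one]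
  exact projSkew_eq_projSkew_transpose_of_add_symm
    ((hQ.matrix_mul hθ).transpose_eq_of_eventually_transpose_eq hsymm)

section Particles

variable {d N : ℕ}

theorem Qmat_add_smul (z x v : Fin N → EuclideanSpace ℝ (Fin d)) (t : ℝ) :
    Qmat z (x + t • v) = Qmat z x + t • Qmat z v := by
  ext α β
  simp [Qmat, mul_add, Finset.sum_add_distrib, Finset.mul_sum, mul_left_comm]

theorem hasLineDerivAt_Qmat (z x v : Fin N → EuclideanSpace ℝ (Fin d)) :
    HasLineDerivAt ℝ (Qmat z) (Qmat z v) x v := by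
  unfold HasLineDerivAt
  simp only [Qmat_add_smul]
  simpa using ((hasDerivAt_id (0 : ℝ)).smul_const (Qmat z v)).const_add (Qmat z x)

theorem Qmat_single (z : Fin N → EuclideanSpace ℝ (Fin d)) (i : Fin N) (γ : Fin d) :
    Qmat z (Pi.single i (EuclideanSpace.single γ 1)) =
      vecMulVec (fun α => z i α) (Pi.single γ 1) := by
  ext α β
  simp [Qmat, vecMulVec_apply, Pi.single_apply, apply_ite WithLp.ofLp, ite_apply]

theorem hasLineDerivAt_partialTheta
    (θ : (Fin N → EuclideanSpace ℝ (Fin d)) → Matrix (Fin d) (Fin d) ℝ)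
    (x : Fin N → EuclideanSpace ℝ (Fin d)) (i : Fin N) (γ : Fin d)
    (hθ : ∀ α β, DifferentiableAt ℝ (fun y => θ y α β) x) :
    HasLineDerivAt ℝ θ (partialTheta θ x i γ) x (Pi.single i (EuclideanSpace.single γ 1)) :=
  hasLineDerivAt_matrix_iff.2 fun α β => (hθ α β).hasFDerivAt.hasLineDerivAt _

end Particles

theorem stmt15_general {d N : ℕ} (z : Fin N → EuclideanSpace ℝ (Fin d))
    (O : Set (Fin N → EuclideanSpace ℝ (Fin d))) (hO : IsOpen O)
    (θ : (Fin N → EuclideanSpace ℝ (Fin d)) → Matrix (Fin d) (Fin d) ℝ)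
    (hθSO : ∀ y ∈ O, IsSO (θ y))
    (hθdiff : ∀ α β : Fin d, DifferentiableOn ℝ (fun y => θ y α β) O)
    (hsym : ∀ y ∈ O, (Qmat z y * θ y)ᵀ = Qmat z y * θ y)
    (x : Fin N → EuclideanSpace ℝ (Fin d)) (hx : x ∈ O) :
    ∀ (γ : Fin d) (i : Fin N),
      ∃ X : Matrix (Fin d) (Fin d) ℝ, Xᵀ = -X ∧
        projSkew (Qmat z x * θ x * X) =
          projSkew (vecMulVec ((θ x)⁻¹ *ᵥ Pi.single γ (1 : ℝ)) (fun β => z i β)) ∧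
        partialTheta θ x i γ = θ x * X := by
  intro γ i
  have hOx : O ∈ 𝓝 x := hO.mem_nhds hx
  have horth : ∀ᶠ y in 𝓝 x, θ y * (θ y)ᵀ = 1 := mem_of_superset hOx fun y hy => (hθSO y hy).1
  have hθx := hasLineDerivAt_partialTheta θ x i γ fun α β => (hθdiff α β).differentiableAt hOx
  refine ⟨(θ x)ᵀ * partialTheta θ x i γ, hθx.transpose_mul_skew horth, ?_, ?_⟩
  · rw [(hasLineDerivAt_Qmat z x _).projSkew_mul_transpose_mul hθx horth
      (mem_of_superset hOx hsym), Qmat_single, vecMulVec_mul, transpose_vecMulVec,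
      Matrix.inv_eq_right_inv horth.self_of_nhds, mulVec_transpose]
  · rw [← Matrix.mul_assoc, horth.self_of_nhds, Matrix.one_mul]

theorem stmt15 {d N : ℕ} (z : Fin N → EuclideanSpace ℝ (Fin d))
    (O : Set (Fin N → EuclideanSpace ℝ (Fin d))) (hO : IsOpen O)
    (θ : (Fin N → EuclideanSpace ℝ (Fin d)) → Matrix (Fin d) (Fin d) ℝ)
    (hθSO : ∀ y ∈ O, IsSO (θ y))
    (hθdiff : ∀ α β : Fin d, DifferentiableOn ℝ (fun y => θ y α β) O)
    (hsym : ∀ y ∈ O, (Qmat z y * θ y)ᵀ = Qmat z y * θ y)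
    (x : Fin N → EuclideanSpace ℝ (Fin d)) (hx : x ∈ O)
    (hinv : ∀ Y : Matrix (Fin d) (Fin d) ℝ, Yᵀ = -Y →
      ∃! X : Matrix (Fin d) (Fin d) ℝ, Xᵀ = -X ∧ projSkew (Qmat z x * θ x * X) = Y) :
    ∀ (γ : Fin d) (i : Fin N),
      ∃ X : Matrix (Fin d) (Fin d) ℝ, Xᵀ = -X ∧
        projSkew (Qmat z x * θ x * X) =
          projSkew (vecMulVec ((θ x)⁻¹ *ᵥ Pi.single γ (1 : ℝ)) (fun β => z i β)) ∧
        partialTheta θ x i γ = θ x * X :=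
  stmt15_general z O hO θ hθSO hθdiff hsym x hx
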